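/- Herglotz variational principle for fields, nonholonomic version (trivial bundle over a box): Let D ⊂ ℝᵐ be a compact axis-parallel box with nonempty interior, let L be a first-order field Lagrangian, and let u : ℝᵐ → ℝⁿ and z : ℝᵐ → ℝᵐ be smooth maps satisfying the constraint Σ_μ ∂z^μ/∂x^μ(x) = L(j(x)) on D. Then (u, z) satisfies the Herglotz field equations at every interior point of D if and only if for every smooth ξ : ℝᵐ → ℝⁿ vanishing on the boundary ∂D, one has ∫_D [ Σ_a ∂L/∂u^a(j(x))·ξ^a(x) + Σ_{a,μ} ∂L/∂w^a_μ(j(x))·∂ξ^a/∂x^μ(x) + Σ_μ ∂L/∂z^μ(j(x))·( Σ_a ∂L/∂w^a_μ(j(x))·ξ^a(x) ) ] dx = 0. -/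

import Mathlib

open Set MeasureTheory

/-- Partial derivative of `F : ℝᵐ → ℝ` in the `μ`-th coordinate direction. -/
noncomputable def pd {m : ℕ} (μ : Fin m) (F : (Fin m → ℝ) → ℝ) (x : Fin m → ℝ) : ℝ :=
  fderiv ℝ F x (Pi.single μ (1 : ℝ))

/-- The space of first-jet variables `(x, u, w, z)` of a first-order field theory. -/
abbrev Jet1 (m n : ℕ) :=
  (Fin m → ℝ) × (Fin n → ℝ) × (Fin n → Fin m → ℝ) × (Fin m → ℝ)

/-- First-jet prolongation `j(x) = (x, u(x), Du(x), z(x))` of a section `(u, z)`. -/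
noncomputable def jet {m n : ℕ} (u : (Fin m → ℝ) → Fin n → ℝ)
    (z : (Fin m → ℝ) → Fin m → ℝ) (x : Fin m → ℝ) : Jet1 m n :=
  (x, u x, fun a μ => pd μ (fun y => u y a) x, z x)

/-- Partial derivative `∂L/∂u^a` of a first-order field Lagrangian. -/
noncomputable def Lu {m n : ℕ} (L : Jet1 m n → ℝ) (a : Fin n) (p : Jet1 m n) : ℝ :=
  fderiv ℝ L p (0, Pi.single a (1 : ℝ), 0, 0)

/-- Partial derivative `∂L/∂w^a_μ` of a first-order field Lagrangian. -/
noncomputable def Lw {m n : ℕ} (L : Jet1 m n → ℝ) (a : Fin n) (μ : Fin m)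
    (p : Jet1 m n) : ℝ :=
  fderiv ℝ L p (0, 0, Pi.single a (Pi.single μ (1 : ℝ)), 0)

/-- Partial derivative `∂L/∂z^μ` of a first-order field Lagrangian. -/
noncomputable def Lz {m n : ℕ} (L : Jet1 m n → ℝ) (μ : Fin m) (p : Jet1 m n) : ℝ :=
  fderiv ℝ L p (0, 0, 0, Pi.single μ (1 : ℝ))

-- helper: pd of a smooth function is smooth
lemma hz_pd_contDiff {m : ℕ} {F : (Fin m → ℝ) → ℝ} (hF : ContDiff ℝ (⊤ : ℕ∞) F)
    (μ : Fin m) : ContDiff ℝ (⊤ : ℕ∞) (pd μ F) := by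
  unfold pd
  exact (hF.fderiv_right (by exact_mod_cast le_top)).clm_apply contDiff_const

lemma hz_fderiv_apply_contDiff {m n : ℕ} {L : Jet1 m n → ℝ}
    (hL : ContDiff ℝ (⊤ : ℕ∞) L) (v : Jet1 m n) :
    ContDiff ℝ (⊤ : ℕ∞) (fun p => fderiv ℝ L p v) :=
  (hL.fderiv_right (by exact_mod_cast le_top)).clm_apply contDiff_const

lemma hz_jet_contDiff {m n : ℕ} {u : (Fin m → ℝ) → Fin n → ℝ}
    {z : (Fin m → ℝ) → Fin m → ℝ} (hu : ContDiff ℝ (⊤ : ℕ∞) u)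
    (hz : ContDiff ℝ (⊤ : ℕ∞) z) : ContDiff ℝ (⊤ : ℕ∞) (jet u z) := by
  unfold jet
  refine ContDiff.prodMk contDiff_id (ContDiff.prodMk hu (ContDiff.prodMk ?_ hz))
  refine contDiff_pi.2 fun a => contDiff_pi.2 fun μ => ?_
  exact hz_pd_contDiff (contDiff_pi.1 hu a) μ

-- pd rules
lemma pd_mul {m : ℕ} {f g : (Fin m → ℝ) → ℝ} {x : Fin m → ℝ}
    (hf : DifferentiableAt ℝ f x) (hg : DifferentiableAt ℝ g x) (μ : Fin m) :
    pd μ (fun y => f y * g y) x = pd μ f x * g x + f x * pd μ g x := by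
  unfold pd
  rw [fderiv_fun_mul hf hg]
  simp only [ContinuousLinearMap.add_apply, ContinuousLinearMap.smul_apply, smul_eq_mul]
  ring

lemma pd_sum {m : ℕ} {ι : Type*} (s : Finset ι) {f : ι → (Fin m → ℝ) → ℝ}
    {x : Fin m → ℝ} (hf : ∀ i ∈ s, DifferentiableAt ℝ (f i) x) (μ : Fin m) :
    pd μ (fun y => ∑ i ∈ s, f i y) x = ∑ i ∈ s, pd μ (f i) x := by
  unfold pd
  rw [fderiv_fun_sum hf]
  simp

lemma hz_alg {n m : ℕ} (A t : Fin n → ℝ) (C : Fin m → ℝ) (B P Q : Fin n → Fin m → ℝ) :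
    (∑ a, A a * t a) + (∑ a, ∑ μ, B a μ * Q a μ) + (∑ μ, C μ * ∑ a, B a μ * t a)
    = (∑ μ, ∑ a, (P a μ * t a + B a μ * Q a μ))
      + (- ∑ a, ((∑ μ, P a μ) - A a - ∑ μ, B a μ * C μ) * t a) := by
  have h1 : ∑ μ, C μ * ∑ a, B a μ * t a = ∑ a, (∑ μ, B a μ * C μ) * t a := by
    calc ∑ μ, C μ * ∑ a, B a μ * t a = ∑ μ, ∑ a, C μ * (B a μ * t a) := by
          simp [Finset.mul_sum]
      _ = ∑ a, ∑ μ, C μ * (B a μ * t a) := Finset.sum_comm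
      _ = ∑ a, (∑ μ, B a μ * C μ) * t a := by
          simp only [Finset.sum_mul]
          exact Finset.sum_congr rfl fun a _ => Finset.sum_congr rfl fun μ _ => by ring
  have h2 : ∑ μ, ∑ a, (P a μ * t a + B a μ * Q a μ)
      = (∑ a, (∑ μ, P a μ) * t a) + ∑ a, ∑ μ, B a μ * Q a μ := by
    rw [Finset.sum_comm]
    simp only [Finset.sum_add_distrib, Finset.sum_mul]
  have h3 : ∑ a, ((∑ μ, P a μ) - A a - ∑ μ, B a μ * C μ) * t a
      = (∑ a, (∑ μ, P a μ) * t a) - (∑ a, A a * t a) - ∑ a, (∑ μ, B a μ * C μ) * t a := by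
    simp only [sub_mul, Finset.sum_sub_distrib]
  rw [h1, h2, h3]; ring

lemma hz_frontier_mem {m : ℕ} (lo hi : Fin (m+1) → ℝ) (hbox : ∀ μ, lo μ < hi μ)
    (i : Fin (m+1)) (c : ℝ) (hc : c = lo i ∨ c = hi i)
    (x : Fin m → ℝ) (hx : x ∈ Icc (lo ∘ i.succAbove) (hi ∘ i.succAbove)) :
    i.insertNth c x ∈ frontier (Icc lo hi) := by
  have hint : interior (Icc lo hi) = Set.pi univ (fun μ => Ioo (lo μ) (hi μ)) := by
    rw [← pi_univ_Icc, interior_pi_set finite_univ]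
    simp [interior_Icc]
  rw [IsClosed.frontier_eq isClosed_Icc]
  constructor
  · refine Fin.insertNth_mem_Icc.2 ⟨?_, hx⟩
    rcases hc with rfl | rfl
    · exact ⟨le_rfl, (hbox i).le⟩
    · exact ⟨(hbox i).le, le_rfl⟩
  · rw [hint]
    intro h
    have := h i (mem_univ i)
    rw [Fin.insertNth_apply_same] at this
    rcases hc with rfl | rfl
    · exact lt_irrefl _ this.1
    · exact lt_irrefl _ this.2

lemma hz_key {m n : ℕ} (hm : 1 ≤ m) (L : Jet1 m n → ℝ) (hL : ContDiff ℝ (⊤ : ℕ∞) L)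
    (lo hi : Fin m → ℝ) (hbox : ∀ μ, lo μ < hi μ)
    (u : (Fin m → ℝ) → Fin n → ℝ) (hu : ContDiff ℝ (⊤ : ℕ∞) u)
    (z : (Fin m → ℝ) → Fin m → ℝ) (hz : ContDiff ℝ (⊤ : ℕ∞) z)
    (ξ : (Fin m → ℝ) → Fin n → ℝ) (hξ : ContDiff ℝ (⊤ : ℕ∞) ξ)
    (hξ0 : ∀ x ∈ frontier (Icc lo hi), ξ x = 0) :
    (∫ x in Icc lo hi,
        ((∑ a : Fin n, Lu L a (jet u z x) * ξ x a)
          + (∑ a : Fin n, ∑ μ : Fin m,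
              Lw L a μ (jet u z x) * pd μ (fun y => ξ y a) x)
          + (∑ μ : Fin m, Lz L μ (jet u z x)
              * ∑ a : Fin n, Lw L a μ (jet u z x) * ξ x a)))
    = - ∫ x in Icc lo hi, ∑ a : Fin n,
        ((∑ μ : Fin m, pd μ (fun y => Lw L a μ (jet u z y)) x) - Lu L a (jet u z x)
          - ∑ μ : Fin m, Lw L a μ (jet u z x) * Lz L μ (jet u z x)) * ξ x a := by
  obtain ⟨k, rfl⟩ : ∃ k, m = k + 1 := ⟨m - 1, (Nat.succ_pred_eq_of_pos hm).symm⟩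
  have hJc : ContDiff ℝ (⊤ : ℕ∞) (jet u z) := hz_jet_contDiff hu hz
  have hW : ∀ (a : Fin n) (μ : Fin (k+1)),
      ContDiff ℝ (⊤ : ℕ∞) (fun y => Lw L a μ (jet u z y)) :=
    fun a μ => (hz_fderiv_apply_contDiff hL _).comp hJc
  have hLuc : ∀ a : Fin n, ContDiff ℝ (⊤ : ℕ∞) (fun y => Lu L a (jet u z y)) :=
    fun a => (hz_fderiv_apply_contDiff hL _).comp hJc
  have hLzc : ∀ μ : Fin (k+1), ContDiff ℝ (⊤ : ℕ∞) (fun y => Lz L μ (jet u z y)) :=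
    fun μ => (hz_fderiv_apply_contDiff hL _).comp hJc
  have hξa : ∀ a : Fin n, ContDiff ℝ (⊤ : ℕ∞) (fun y => ξ y a) := fun a => contDiff_pi.1 hξ a
  set F : Fin (k+1) → (Fin (k+1) → ℝ) → ℝ :=
    fun μ y => ∑ a : Fin n, Lw L a μ (jet u z y) * ξ y a with hFdef
  have hF : ∀ μ, ContDiff ℝ (⊤ : ℕ∞) (F μ) :=
    fun μ => ContDiff.sum fun a _ => (hW a μ).mul (hξa a)
  -- divergence theorem: the integral of the divergence of F vanishes
  have hdiv : (∫ x in Icc lo hi, ∑ μ, pd μ (F μ) x) = 0 := by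
    have H := integral_divergence_of_hasFDerivAt_off_countable' lo hi
      (fun μ => (hbox μ).le) F (fun μ x => fderiv ℝ (F μ) x) ∅ countable_empty
      (fun μ => (hF μ).continuous.continuousOn)
      (fun x _ μ => (((hF μ).differentiable (by simp)) x).hasFDerivAt)
      (((continuous_finset_sum Finset.univ fun μ _ =>
          (hz_pd_contDiff (hF μ) μ).continuous).continuousOn).integrableOn_compact isCompact_Icc)
    rw [show (fun x => ∑ μ, pd μ (F μ) x) = fun x => ∑ μ, fderiv ℝ (F μ) x (Pi.single μ 1)
      from rfl]
    rw [H]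
    refine Finset.sum_eq_zero fun i _ => ?_
    have h1 : (∫ x in Icc (lo ∘ i.succAbove) (hi ∘ i.succAbove),
        F i (i.insertNth (hi i) x)) = 0 := by
      refine setIntegral_eq_zero_of_forall_eq_zero fun x hx => ?_
      have := hξ0 _ (hz_frontier_mem lo hi hbox i (hi i) (Or.inr rfl) x hx)
      simp [hFdef, this]
    have h2 : (∫ x in Icc (lo ∘ i.succAbove) (hi ∘ i.succAbove),
        F i (i.insertNth (lo i) x)) = 0 := by
      refine setIntegral_eq_zero_of_forall_eq_zero fun x hx => ?_
      have := hξ0 _ (hz_frontier_mem lo hi hbox i (lo i) (Or.inl rfl) x hx)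
      simp [hFdef, this]
    rw [h1, h2, sub_self]
  have hpdF : ∀ (x' : Fin (k+1) → ℝ) (μ : Fin (k+1)), pd μ (F μ) x' = ∑ a : Fin n,
      (pd μ (fun y => Lw L a μ (jet u z y)) x' * ξ x' a
        + Lw L a μ (jet u z x') * pd μ (fun y => ξ y a) x') := by
    intro x' μ
    rw [hFdef]
    rw [pd_sum Finset.univ (fun a _ =>
      (((hW a μ).mul (hξa a)).differentiable (by simp)) x') μ]
    exact Finset.sum_congr rfl fun a _ => pd_mul
      (((hW a μ).differentiable (by simp)) x')
      (((hξa a).differentiable (by simp)) x') μ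
  have hpt : ∀ x' : Fin (k+1) → ℝ,
      ((∑ a : Fin n, Lu L a (jet u z x') * ξ x' a)
        + (∑ a : Fin n, ∑ μ : Fin (k+1),
            Lw L a μ (jet u z x') * pd μ (fun y => ξ y a) x')
        + (∑ μ : Fin (k+1), Lz L μ (jet u z x')
            * ∑ a : Fin n, Lw L a μ (jet u z x') * ξ x' a))
      = (∑ μ : Fin (k+1), pd μ (F μ) x')
        + (- ∑ a : Fin n,
            ((∑ μ : Fin (k+1), pd μ (fun y => Lw L a μ (jet u z y)) x')
              - Lu L a (jet u z x')
              - ∑ μ : Fin (k+1), Lw L a μ (jet u z x') * Lz L μ (jet u z x')) * ξ x' a) := by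
    intro x'
    rw [show (∑ μ : Fin (k+1), pd μ (F μ) x') = ∑ μ : Fin (k+1), ∑ a : Fin n,
        (pd μ (fun y => Lw L a μ (jet u z y)) x' * ξ x' a
          + Lw L a μ (jet u z x') * pd μ (fun y => ξ y a) x')
      from Finset.sum_congr rfl fun μ _ => hpdF x' μ]
    exact hz_alg (fun a => Lu L a (jet u z x')) (fun a => ξ x' a)
      (fun μ => Lz L μ (jet u z x')) (fun a μ => Lw L a μ (jet u z x'))
      (fun a μ => pd μ (fun y => Lw L a μ (jet u z y)) x')
      (fun a μ => pd μ (fun y => ξ y a) x')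
  have hInt1 : IntegrableOn (fun x => ∑ μ : Fin (k+1), pd μ (F μ) x) (Icc lo hi) volume :=
    ((continuous_finset_sum Finset.univ fun μ _ =>
      (hz_pd_contDiff (hF μ) μ).continuous).continuousOn).integrableOn_compact isCompact_Icc
  have hInt2 : IntegrableOn (fun x => - ∑ a : Fin n,
      ((∑ μ : Fin (k+1), pd μ (fun y => Lw L a μ (jet u z y)) x) - Lu L a (jet u z x)
        - ∑ μ : Fin (k+1), Lw L a μ (jet u z x) * Lz L μ (jet u z x)) * ξ x a)
      (Icc lo hi) volume := by
    refine (Continuous.continuousOn ?_).integrableOn_compact isCompact_Icc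
    refine Continuous.neg ?_
    refine continuous_finset_sum Finset.univ fun a _ => Continuous.mul ?_ (hξa a).continuous
    refine Continuous.sub (Continuous.sub ?_ (hLuc a).continuous) ?_
    · exact continuous_finset_sum Finset.univ fun μ _ => (hz_pd_contDiff (hW a μ) μ).continuous
    · exact continuous_finset_sum Finset.univ fun μ _ =>
        ((hW a μ).continuous.mul (hLzc μ).continuous)
  calc (∫ x in Icc lo hi,
        ((∑ a : Fin n, Lu L a (jet u z x) * ξ x a)
          + (∑ a : Fin n, ∑ μ : Fin (k+1),
              Lw L a μ (jet u z x) * pd μ (fun y => ξ y a) x)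
          + (∑ μ : Fin (k+1), Lz L μ (jet u z x)
              * ∑ a : Fin n, Lw L a μ (jet u z x) * ξ x a)))
      = ∫ x in Icc lo hi, ((∑ μ : Fin (k+1), pd μ (F μ) x)
          + (- ∑ a : Fin n,
              ((∑ μ : Fin (k+1), pd μ (fun y => Lw L a μ (jet u z y)) x)
                - Lu L a (jet u z x)
                - ∑ μ : Fin (k+1), Lw L a μ (jet u z x) * Lz L μ (jet u z x)) * ξ x a)) := by
        exact integral_congr_ae (Filter.EventuallyEq.of_eq (funext hpt))
    _ = (∫ x in Icc lo hi, ∑ μ : Fin (k+1), pd μ (F μ) x)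
        + ∫ x in Icc lo hi, (- ∑ a : Fin n,
            ((∑ μ : Fin (k+1), pd μ (fun y => Lw L a μ (jet u z y)) x)
              - Lu L a (jet u z x)
              - ∑ μ : Fin (k+1), Lw L a μ (jet u z x) * Lz L μ (jet u z x)) * ξ x a) :=
        integral_add hInt1 hInt2
    _ = - ∫ x in Icc lo hi, ∑ a : Fin n,
            ((∑ μ : Fin (k+1), pd μ (fun y => Lw L a μ (jet u z y)) x)
              - Lu L a (jet u z x)
              - ∑ μ : Fin (k+1), Lw L a μ (jet u z x) * Lz L μ (jet u z x)) * ξ x a := by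
        rw [hdiv, integral_neg, zero_add]


/-- Herglotz variational principle for fields, nonholonomic version, over a
compact axis-parallel box `D = Icc lo hi ⊂ ℝᵐ` with nonempty interior. -/
theorem herglotz_fields_nonholonomic (m n : ℕ) (hm : 1 ≤ m) (hn : 1 ≤ n)
    (L : Jet1 m n → ℝ) (hL : ContDiff ℝ (⊤ : ℕ∞) L)
    (lo hi : Fin m → ℝ) (hbox : ∀ μ, lo μ < hi μ)
    (u : (Fin m → ℝ) → Fin n → ℝ) (hu : ContDiff ℝ (⊤ : ℕ∞) u)
    (z : (Fin m → ℝ) → Fin m → ℝ) (hz : ContDiff ℝ (⊤ : ℕ∞) z)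
    (hconstr : ∀ x ∈ Icc lo hi,
      (∑ μ : Fin m, pd μ (fun y => z y μ) x) = L (jet u z x)) :
    -- Herglotz field equations at every interior point of the box
    (∀ x ∈ interior (Icc lo hi), ∀ a : Fin n,
        (∑ μ : Fin m, pd μ (fun y => Lw L a μ (jet u z y)) x) - Lu L a (jet u z x)
          = ∑ μ : Fin m, Lw L a μ (jet u z x) * Lz L μ (jet u z x))
    ↔
    -- vanishing of the first variation along all Chetaev variations
    (∀ ξ : (Fin m → ℝ) → Fin n → ℝ, ContDiff ℝ (⊤ : ℕ∞) ξ →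
      (∀ x ∈ frontier (Icc lo hi), ξ x = 0) →
      (∫ x in Icc lo hi,
          ((∑ a : Fin n, Lu L a (jet u z x) * ξ x a)
            + (∑ a : Fin n, ∑ μ : Fin m,
                Lw L a μ (jet u z x) * pd μ (fun y => ξ y a) x)
            + (∑ μ : Fin m, Lz L μ (jet u z x)
                * ∑ a : Fin n, Lw L a μ (jet u z x) * ξ x a))) = 0) := by
  have hJc : ContDiff ℝ (⊤ : ℕ∞) (jet u z) := hz_jet_contDiff hu hz
  have hW : ∀ (a : Fin n) (μ : Fin m),
      ContDiff ℝ (⊤ : ℕ∞) (fun y => Lw L a μ (jet u z y)) :=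
    fun a μ => (hz_fderiv_apply_contDiff hL _).comp hJc
  have hLuc : ∀ a : Fin n, ContDiff ℝ (⊤ : ℕ∞) (fun y => Lu L a (jet u z y)) :=
    fun a => (hz_fderiv_apply_contDiff hL _).comp hJc
  have hLzc : ∀ μ : Fin m, ContDiff ℝ (⊤ : ℕ∞) (fun y => Lz L μ (jet u z y)) :=
    fun μ => (hz_fderiv_apply_contDiff hL _).comp hJc
  set EL : Fin n → (Fin m → ℝ) → ℝ := fun a x =>
    (∑ μ : Fin m, pd μ (fun y => Lw L a μ (jet u z y)) x) - Lu L a (jet u z x)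
      - ∑ μ : Fin m, Lw L a μ (jet u z x) * Lz L μ (jet u z x) with hELdef
  have hELcont : ∀ a, Continuous (EL a) := by
    intro a
    refine Continuous.sub (Continuous.sub ?_ (hLuc a).continuous) ?_
    · exact continuous_finset_sum Finset.univ fun μ _ => (hz_pd_contDiff (hW a μ) μ).continuous
    · exact continuous_finset_sum Finset.univ fun μ _ =>
        ((hW a μ).continuous.mul (hLzc μ).continuous)
  constructor
  · -- Euler ⇒ variation vanishes
    intro hEuler ξ hξ hξ0
    rw [hz_key hm L hL lo hi hbox u hu z hz ξ hξ hξ0, neg_eq_zero]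
    have hnull : volume (frontier (Icc lo hi)) = 0 :=
      (convex_Icc lo hi).addHaar_frontier volume
    refine setIntegral_eq_zero_of_ae_eq_zero ?_
    have hae : ∀ᵐ x : Fin m → ℝ, x ∉ frontier (Icc lo hi) :=
      (MeasureTheory.measure_eq_zero_iff_ae_notMem).1 hnull
    filter_upwards [hae] with x hxf hxIcc
    have hxint : x ∈ interior (Icc lo hi) := by
      by_contra hni
      exact hxf (by rw [IsClosed.frontier_eq isClosed_Icc]; exact ⟨hxIcc, hni⟩)
    refine Finset.sum_eq_zero fun a _ => ?_
    have := hEuler x hxint a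
    have h0 : (∑ μ : Fin m, pd μ (fun y => Lw L a μ (jet u z y)) x) - Lu L a (jet u z x)
        - ∑ μ : Fin m, Lw L a μ (jet u z x) * Lz L μ (jet u z x) = 0 := by
      rw [this]; ring
    rw [h0, zero_mul]
  · -- variation vanishes ⇒ Euler
    intro hvar x₀ hx₀ a
    set U := interior (Icc lo hi) with hUdef
    have hU : IsOpen U := isOpen_interior
    have key0 : ∀ g : (Fin m → ℝ) → ℝ, ContDiff ℝ ((⊤ : ℕ∞) : WithTop ℕ∞) g → HasCompactSupport g →
        tsupport g ⊆ U → ∫ x : Fin m → ℝ, g x • (EL a x) = 0 := by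
      intro g hg hgc hgs
      set ξ : (Fin m → ℝ) → Fin n → ℝ := fun x => g x • (Pi.single a (1:ℝ) : Fin n → ℝ) with hξdef
      have hξ : ContDiff ℝ (⊤ : ℕ∞) ξ := ContDiff.smul hg contDiff_const
      have hξ0 : ∀ x ∈ frontier (Icc lo hi), ξ x = 0 := by
        intro x hx
        have hxU : x ∉ U := hx.2
        have hgx : g x = 0 :=
          image_eq_zero_of_notMem_tsupport (fun hmem => hxU (hgs hmem))
        simp [hξdef, hgx]
      have hIcc0 : (∫ x in Icc lo hi, ∑ b : Fin n,
          ((∑ μ : Fin m, pd μ (fun y => Lw L b μ (jet u z y)) x) - Lu L b (jet u z x)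
            - ∑ μ : Fin m, Lw L b μ (jet u z x) * Lz L μ (jet u z x)) * ξ x b) = 0 := by
        have hkey := hz_key hm L hL lo hi hbox u hu z hz ξ hξ hξ0
        rw [hvar ξ hξ hξ0] at hkey
        linarith [hkey]
      have hIcc1 : (∫ x in Icc lo hi, g x • EL a x) = 0 := by
        rw [← hIcc0]
        refine integral_congr_ae (Filter.EventuallyEq.of_eq (funext fun x => ?_))
        simp only [hELdef, hξdef, smul_eq_mul, Pi.smul_apply, Pi.single_apply, mul_ite,
          mul_one, mul_zero, Finset.sum_ite_eq', Finset.mem_univ, if_true]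
        ring
      rw [← hIcc1]
      refine (setIntegral_eq_integral_of_forall_compl_eq_zero fun x hx => ?_).symm
      have hgx : g x = 0 :=
        image_eq_zero_of_notMem_tsupport (fun hmem => hx (interior_subset (hgs hmem)))
      simp [hgx]
    have hae := hU.ae_eq_zero_of_integral_contDiff_smul_eq_zero
      ((hELcont a).locallyIntegrable.locallyIntegrableOn U) key0
    have heq : EqOn (EL a) 0 U :=
      Measure.eqOn_open_of_ae_eq ((ae_restrict_iff' hU.measurableSet).2 hae) hU
        (hELcont a).continuousOn continuousOn_const
    have h0 := heq hx₀
    simp only [hELdef, Pi.zero_apply] at h0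
    linarith [h0]
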